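/- For every n ≥ 1, the truncated Heisenberg matrices satisfy the commutation relation [X_n, Y_n] = i(1 − Z_n), where 1 is the n×n identity matrix. -/
import Mathlib


noncomputable section

/-- The truncated position matrix `X_n`: symmetric tridiagonal with zero diagonal and
`(X_n)_{m,m+1} = (X_n)_{m+1,m} = √m/√2`. -/
def truncX (n : ℕ) : Matrix (Fin n) (Fin n) ℂ := fun i j =>
  if (i : ℕ) + 1 = (j : ℕ) then ((Real.sqrt ((i : ℕ) + 1) / Real.sqrt 2 : ℝ) : ℂ)
  else if (j : ℕ) + 1 = (i : ℕ) then ((Real.sqrt ((j : ℕ) + 1) / Real.sqrt 2 : ℝ) : ℂ)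
  else 0

/-- The truncated momentum matrix `Y_n`: zero diagonal, `(Y_n)_{m,m+1} = −i√m/√2`,
`(Y_n)_{m+1,m} = i√m/√2`. -/
def truncY (n : ℕ) : Matrix (Fin n) (Fin n) ℂ := fun i j =>
  if (i : ℕ) + 1 = (j : ℕ) then -Complex.I * ((Real.sqrt ((i : ℕ) + 1) / Real.sqrt 2 : ℝ) : ℂ)
  else if (j : ℕ) + 1 = (i : ℕ) then Complex.I * ((Real.sqrt ((j : ℕ) + 1) / Real.sqrt 2 : ℝ) : ℂ)
  else 0

/-- The matrix `Z_n`: diagonal, all diagonal entries `0` except the last, which equals `n`. -/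
def truncZ (n : ℕ) : Matrix (Fin n) (Fin n) ℂ :=
  Matrix.diagonal fun i => if (i : ℕ) = n - 1 then (n : ℂ) else 0

open Matrix

def cc (m : ℕ) : ℂ := ((Real.sqrt m / Real.sqrt 2 : ℝ) : ℂ)

def ladder (n : ℕ) : Matrix (Fin n) (Fin n) ℂ := fun i j =>
  if (i : ℕ) + 1 = (j : ℕ) then cc ((i : ℕ) + 1) else 0

lemma cc_sq (m : ℕ) : cc m * cc m = (m : ℂ) / 2 := by
  have h : (Real.sqrt m / Real.sqrt 2) * (Real.sqrt m / Real.sqrt 2) = (m : ℝ) / 2 := by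
    rw [div_mul_div_comm, Real.mul_self_sqrt (by positivity), Real.mul_self_sqrt (by norm_num)]
  unfold cc
  rw [← Complex.ofReal_mul, h]
  push_cast
  ring

lemma sum_ite_nat {n : ℕ} (m : ℕ) (f : Fin n → ℂ) :
    ∑ k : Fin n, (if m = (k : ℕ) then f k else 0)
      = if h : m < n then f ⟨m, h⟩ else 0 := by
  split
  · rename_i h
    rw [Finset.sum_eq_single (⟨m, h⟩ : Fin n)]
    · simp
    · intro b _ hb
      rw [if_neg]
      intro he
      exact hb (Fin.ext he.symm)
    · simp
  · rename_i h
    apply Finset.sum_eq_zero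
    intro k _
    rw [if_neg]
    intro he
    exact h (he ▸ k.isLt)

lemma hSSt (n : ℕ) (i j : Fin n) :
    (ladder n * (ladder n)ᵀ) i j
      = if (i : ℕ) = (j : ℕ) ∧ (i : ℕ) + 1 < n then (((i : ℕ) : ℂ) + 1) / 2 else 0 := by
  rw [Matrix.mul_apply]
  simp only [Matrix.transpose_apply]
  have step : ∀ k : Fin n, ladder n i k * ladder n j k
      = if (i : ℕ) + 1 = (k : ℕ) then cc ((i : ℕ) + 1) * ladder n j k else 0 := by
    intro k
    by_cases hc : (i : ℕ) + 1 = (k : ℕ)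
    · simp [ladder, hc]
    · simp [ladder, hc]
  rw [Finset.sum_congr rfl (fun k _ => step k),
    sum_ite_nat ((i : ℕ) + 1) (fun k => cc ((i : ℕ) + 1) * ladder n j k)]
  by_cases h : (i : ℕ) + 1 < n
  · rw [dif_pos h]
    simp only [ladder]
    by_cases hij : (j : ℕ) + 1 = (i : ℕ) + 1
    · have hij' : (i : ℕ) = (j : ℕ) := by omega
      rw [if_pos hij, if_pos ⟨hij', h⟩, ← hij']
      rw [cc_sq]
      push_cast
      ring
    · rw [if_neg hij, if_neg (by omega), mul_zero]
  · rw [dif_neg h, if_neg (by omega)]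

lemma hStS (n : ℕ) (i j : Fin n) :
    ((ladder n)ᵀ * ladder n) i j
      = if (i : ℕ) = (j : ℕ) then ((i : ℕ) : ℂ) / 2 else 0 := by
  rw [Matrix.mul_apply]
  simp only [Matrix.transpose_apply]
  have step : ∀ k : Fin n, ladder n k i * ladder n k j
      = if (k : ℕ) + 1 = (i : ℕ) then cc (i : ℕ) * ladder n k j else 0 := by
    intro k
    by_cases hc : (k : ℕ) + 1 = (i : ℕ)
    · simp [ladder, hc]
    · simp [ladder, hc]
  rw [Finset.sum_congr rfl (fun k _ => step k)]
  by_cases hi : 1 ≤ (i : ℕ)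
  · have hcond : ∀ k : Fin n, ((k : ℕ) + 1 = (i : ℕ)) = ((i : ℕ) - 1 = (k : ℕ)) := by
      intro k
      simp only [eq_iff_iff]
      omega
    simp only [hcond]
    rw [sum_ite_nat ((i : ℕ) - 1) (fun k => cc (i : ℕ) * ladder n k j)]
    have hlt : (i : ℕ) - 1 < n := by omega
    rw [dif_pos hlt]
    simp only [ladder]
    have hstep : (i : ℕ) - 1 + 1 = (i : ℕ) := by omega
    rw [hstep]
    by_cases hij : (i : ℕ) = (j : ℕ)
    · rw [if_pos hij, if_pos hij, cc_sq]
    · rw [if_neg hij, if_neg hij, mul_zero]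
  · have hi0 : (i : ℕ) = 0 := by omega
    have : ∀ k : Fin n, (if (k : ℕ) + 1 = (i : ℕ) then cc (i : ℕ) * ladder n k j else 0) = 0 := by
      intro k
      rw [if_neg (by omega)]
    rw [Finset.sum_congr rfl (fun k _ => this k), Finset.sum_const_zero]
    rw [hi0]
    split <;> simp

lemma key (n : ℕ) (hn : 1 ≤ n) :
    ladder n * (ladder n)ᵀ - (ladder n)ᵀ * ladder n
      = (2 : ℂ)⁻¹ • ((1 : Matrix (Fin n) (Fin n) ℂ) - truncZ n) := by
  ext i j
  rw [Matrix.sub_apply, hSSt, hStS, Matrix.smul_apply, Matrix.sub_apply, Matrix.one_apply]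
  simp only [truncZ, Matrix.diagonal_apply, smul_eq_mul]
  by_cases hij : i = j
  · subst hij
    rw [if_pos rfl]
    by_cases h : (i : ℕ) + 1 < n
    · rw [if_pos ⟨rfl, h⟩, if_neg (by omega : ¬ (i : ℕ) = n - 1)]
      norm_num
      ring
    · have hi : (i : ℕ) = n - 1 := by omega
      rw [if_neg (by omega), if_pos hi, hi]
      have : ((n - 1 : ℕ) : ℂ) = (n : ℂ) - 1 := by
        push_cast [Nat.cast_sub hn]
        ring
      rw [this]
      simp only [if_true]
      ring
  · have hij' : ¬ (i : ℕ) = (j : ℕ) := fun h => hij (Fin.ext h)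
    rw [if_neg (by tauto)]
    simp [hij, hij']

open Matrix in
lemma hXdecomp (n : ℕ) : truncX n = ladder n + (ladder n)ᵀ := by
  ext i j
  simp only [truncX, ladder, cc, Matrix.add_apply, Matrix.transpose_apply]
  by_cases h1 : (i : ℕ) + 1 = (j : ℕ)
  · rw [if_pos h1, if_pos h1, if_neg (by omega)]
    push_cast
    ring
  · rw [if_neg h1, if_neg h1]
    by_cases h2 : (j : ℕ) + 1 = (i : ℕ)
    · rw [if_pos h2, if_pos h2]
      push_cast
      ring
    · rw [if_neg h2, if_neg h2]
      ring

open Matrix in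
lemma hYdecomp (n : ℕ) : truncY n = Complex.I • ((ladder n)ᵀ - ladder n) := by
  ext i j
  simp only [truncY, ladder, cc, Matrix.smul_apply, Matrix.sub_apply, Matrix.transpose_apply,
    smul_eq_mul]
  by_cases h1 : (i : ℕ) + 1 = (j : ℕ)
  · rw [if_pos h1, if_pos h1, if_neg (by omega)]
    push_cast
    ring
  · rw [if_neg h1, if_neg h1]
    by_cases h2 : (j : ℕ) + 1 = (i : ℕ)
    · rw [if_pos h2, if_pos h2]
      push_cast
      ring
    · rw [if_neg h2, if_neg h2]
      ring

/-- `[X_n, Y_n] = i(1 − Z_n)`. -/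
theorem truncated_heisenberg_XY (n : ℕ) (hn : 1 ≤ n) :
    truncX n * truncY n - truncY n * truncX n
      = Complex.I • ((1 : Matrix (Fin n) (Fin n) ℂ) - truncZ n) := by
  rw [hXdecomp, hYdecomp]
  set S := ladder n
  have h1 : (S + Sᵀ) * (Complex.I • (Sᵀ - S)) - (Complex.I • (Sᵀ - S)) * (S + Sᵀ)
      = Complex.I • ((S + Sᵀ) * (Sᵀ - S) - (Sᵀ - S) * (S + Sᵀ)) := by
    rw [Matrix.mul_smul, Matrix.smul_mul, smul_sub]
  have h2 : (S + Sᵀ) * (Sᵀ - S) - (Sᵀ - S) * (S + Sᵀ)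
      = (S * Sᵀ - Sᵀ * S) + (S * Sᵀ - Sᵀ * S) := by
    noncomm_ring
  rw [h1, h2, key n hn, ← add_smul]
  norm_num
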